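/- arXiv:1412.2832 — 4 statements merged into one kernel-verified Lean document; each statement's English description precedes it below -/
import Mathlib

section
/- Let R be a reduced root system in ℝ^N with positive subsystem R₊, W-invariant multiplicity function κ with κ(α) > 0, and γ = Σ_{α∈R₊} κ(α). Assume W acts irreducibly on Span(R) and let d_R = dim Span(R). For β > 0, the linear endomorphism of ℝ^N given by x ↦ x + β Σ_{α∈R₊} κ(α) (⟪α,x⟫/⟪α,α⟫) α is invertible, and its inverse maps x to x_⊥ + x_∥/(1 + βγ/d_R), where x_∥ is the orthogonal projection of x onto Span(R) and x_⊥ = x − x_∥. (This is the matrix M_β representing the action of Dunkl's intertwining operator V_β on linear functions: V_β(⟪x,y⟫) = ⟪x_∥,y_∥⟫/(1+βγ/d_R) + ⟪x_⊥,y_⊥⟫.) -/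
/-!
Write the map as `id + β • B` with `B = Σ_{α ∈ R₊} κ(α) P_α`, where `P_α` is the orthogonal
projection onto `ℝα`. The operator `B` is symmetric, takes values in `V = span R` and kills `Vᗮ`.
It commutes with `W`: the sum over all of `R` equals `2 • B` and is visibly `W`-equivariant.
An eigenspace of the symmetric operator `B|_V` is then a nonzero `W`-stable subspace of `V`, so by
irreducibility `B = μ • P_V`, and taking traces gives `γ = μ d_R`. Hence the map is
`id + (βγ/d_R) • P_V`, which is inverted separately on `V` and on `Vᗮ`.
-/

open scoped RealInnerProductSpace BigOperators
open MeasureTheory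

noncomputable section

/-- Reflection of `x` along the vector `α`. -/
def sigmaRefl {N : ℕ} (α x : EuclideanSpace ℝ (Fin N)) : EuclideanSpace ℝ (Fin N) :=
  x - (2 * ⟪α, x⟫ / ⟪α, α⟫) • α

/-- A reduced root system in `ℝ^N`, together with a choice of positivity direction `m`. -/
structure DunklRootSystem (N : ℕ) where
  R : Finset (EuclideanSpace ℝ (Fin N))
  nonzero : ∀ α ∈ R, α ≠ 0
  invariant : ∀ α ∈ R, ∀ ξ ∈ R, sigmaRefl α ξ ∈ R
  reduced : ∀ α ∈ R, ∀ ξ ∈ R, ∀ a : ℝ, ξ = a • α → a = 1 ∨ a = -1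
  m : EuclideanSpace ℝ (Fin N)
  m_transverse : ∀ α ∈ R, ⟪α, m⟫ ≠ 0

/-- The positive subsystem `R₊`. -/
def DunklRootSystem.pos {N : ℕ} (S : DunklRootSystem N) : Finset (EuclideanSpace ℝ (Fin N)) :=
  S.R.filter fun α => 0 < ⟪α, S.m⟫

/-- The reflection group `W`, as a subgroup of the group of linear isometries of `ℝ^N`. -/
def DunklRootSystem.W {N : ℕ} (S : DunklRootSystem N) :
    Subgroup (EuclideanSpace ℝ (Fin N) ≃ₗᵢ[ℝ] EuclideanSpace ℝ (Fin N)) :=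
  Subgroup.closure { g | ∃ α ∈ S.R, ⇑g = sigmaRefl α }

/-- The Dunkl operator `T_i` (with renormalized multiplicities `κ` and coupling `β`). -/
def dunklT {N : ℕ} (S : DunklRootSystem N) (κ : EuclideanSpace ℝ (Fin N) → ℝ) (β : ℝ)
    (i : Fin N) (f : EuclideanSpace ℝ (Fin N) → ℝ) (x : EuclideanSpace ℝ (Fin N)) : ℝ :=
  fderiv ℝ f x (EuclideanSpace.single i 1) +
    (β / 2) * ∑ α ∈ S.pos, α i * κ α * ((f x - f (sigmaRefl α x)) / ⟪α, x⟫)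

section InnerProductSpace

open InnerProductSpace

variable {E : Type*} [NormedAddCommGroup E] [InnerProductSpace ℝ E]

namespace Submodule

variable (V : Submodule ℝ E) [V.HasOrthogonalProjection] {t : ℝ}

theorem starProjection_starProjection (x : E) :
    V.starProjection (V.starProjection x) = V.starProjection x :=
  V.starProjection_eq_self_iff.2 (V.starProjection_apply_mem x)

theorem leftInverse_add_smul_starProjection (ht : 1 + t ≠ 0) :
    Function.LeftInverse (fun x => x - V.starProjection x + (1 + t)⁻¹ • V.starProjection x)
      (fun x => x + t • V.starProjection x) := by
  intro x
  simp only [map_add, map_smul, starProjection_starProjection]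
  match_scalars <;> field_simp
  ring

theorem rightInverse_add_smul_starProjection (ht : 1 + t ≠ 0) :
    Function.RightInverse (fun x => x - V.starProjection x + (1 + t)⁻¹ • V.starProjection x)
      (fun x => x + t • V.starProjection x) := by
  intro x
  simp only [map_add, map_sub, map_smul, starProjection_starProjection]
  match_scalars <;> field_simp
  ring

theorem trace_starProjection [FiniteDimensional ℝ E] :
    LinearMap.trace ℝ E (V.starProjection : E →ₗ[ℝ] E) = Module.finrank ℝ V :=
  LinearMap.IsProj.trace ⟨V.starProjection_apply_mem, fun _ hx => V.starProjection_eq_self_iff.2 hx⟩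

end Submodule

theorem LinearMap.eq_smul_starProjection {T : E →ₗ[ℝ] E} {V : Submodule ℝ E}
    [V.HasOrthogonalProjection] {μ : ℝ} (hV : ∀ x ∈ V, T x = μ • x) (hVperp : ∀ x ∈ Vᗮ, T x = 0) :
    T = μ • (V.starProjection : E →ₗ[ℝ] E) := by
  ext x
  have hx : T x = T (V.starProjection x) + T (x - V.starProjection x) := by
    rw [← map_add, add_sub_cancel]
  rw [hx, hV _ (V.starProjection_apply_mem x), hVperp _ (V.sub_starProjection_mem_orthogonal x),
    add_zero]
  rfl

theorem LinearMap.IsSymmetric.exists_apply_eq_smul_of_irreducible [FiniteDimensional ℝ E]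
    {F : Type*} [FunLike F E E] [LinearMapClass F ℝ E E]
    {T : E →ₗ[ℝ] E} (hT : T.IsSymmetric) {V : Submodule ℝ E} (hTV : ∀ x ∈ V, T x ∈ V)
    (G : Set F) (hGV : ∀ g ∈ G, ∀ x ∈ V, g x ∈ V) (hGT : ∀ g ∈ G, ∀ x, T (g x) = g (T x))
    (hirr : ∀ U : Submodule ℝ E, U ≤ V → (∀ g ∈ G, ∀ u ∈ U, g u ∈ U) → U = ⊥ ∨ U = V) :
    ∃ μ : ℝ, ∀ x ∈ V, T x = μ • x := by
  rcases subsingleton_or_nontrivial V with hV | hV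
  · refine ⟨0, fun x hx => ?_⟩
    obtain rfl : x = 0 := (Submodule.mem_bot ℝ).1 (Submodule.subsingleton_iff_eq_bot.1 hV ▸ hx)
    rw [map_zero, smul_zero]
  obtain ⟨μ, hμ⟩ : ∃ μ, Module.End.HasEigenvalue (T.restrict hTV) μ :=
    ⟨_, (hT.restrict_invariant hTV).hasEigenvalue_iSup_of_finiteDimensional⟩
  obtain ⟨v, hv⟩ := hμ.exists_hasEigenvector
  set U := V ⊓ Module.End.eigenspace T μ
  have hUG : ∀ g ∈ G, ∀ u ∈ U, g u ∈ U := by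
    rintro g hg u ⟨huV, huT⟩
    refine ⟨hGV g hg u huV, ?_⟩
    rw [SetLike.mem_coe, Module.End.mem_eigenspace_iff] at huT ⊢
    rw [hGT g hg, huT, map_smul]
  have hvU : (v : E) ∈ U :=
    ⟨v.2, Module.End.mem_eigenspace_iff.2 (congrArg Subtype.val hv.apply_eq_smul)⟩
  have hUV : U = V := (hirr U inf_le_left hUG).resolve_left fun hU =>
    hv.2 (Subtype.ext ((Submodule.mem_bot ℝ).1 (hU ▸ hvU)))
  exact ⟨μ, fun x hx => Module.End.mem_eigenspace_iff.1 (hUV ▸ hx : x ∈ U).2⟩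

/-- `Σ_{α ∈ s} κ(α) P_α`, with `P_α` the orthogonal projection onto `ℝ α`. -/
def weightedProjSum (s : Finset E) (κ : E → ℝ) : E →ₗ[ℝ] E :=
  ∑ α ∈ s, (κ α / ⟪α, α⟫) • (rankOne ℝ α α : E →ₗ[ℝ] E)

variable (s : Finset E) (κ : E → ℝ)

theorem weightedProjSum_apply (x : E) :
    weightedProjSum s κ x = ∑ α ∈ s, (κ α * (⟪α, x⟫ / ⟪α, α⟫)) • α := by
  simp only [weightedProjSum, LinearMap.sum_apply, LinearMap.smul_apply,
    ContinuousLinearMap.coe_coe, rankOne_apply, smul_smul]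
  refine Finset.sum_congr rfl fun α _ => ?_
  rw [div_mul_eq_mul_div, mul_div_assoc]

theorem isSymmetric_weightedProjSum : (weightedProjSum s κ).IsSymmetric := by
  intro x y
  simp only [weightedProjSum_apply, sum_inner, inner_sum, real_inner_smul_left,
    real_inner_smul_right, real_inner_comm x]
  exact Finset.sum_congr rfl fun α _ => by ring

theorem weightedProjSum_mem_span (x : E) :
    weightedProjSum s κ x ∈ Submodule.span ℝ (s : Set E) := by
  rw [weightedProjSum_apply]
  exact Submodule.sum_mem _ fun α hα => Submodule.smul_mem _ _ (Submodule.subset_span hα)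

theorem weightedProjSum_eq_zero_of_mem_orthogonal {x : E}
    (hx : x ∈ (Submodule.span ℝ (s : Set E))ᗮ) : weightedProjSum s κ x = 0 := by
  rw [weightedProjSum_apply]
  refine Finset.sum_eq_zero fun α hα => ?_
  rw [(Submodule.mem_orthogonal _ x).1 hx α (Submodule.subset_span hα)]
  simp

theorem trace_weightedProjSum [FiniteDimensional ℝ E] (hs : ∀ α ∈ s, α ≠ 0) :
    LinearMap.trace ℝ E (weightedProjSum s κ) = ∑ α ∈ s, κ α := by
  rw [weightedProjSum, map_sum]
  refine Finset.sum_congr rfl fun α hα => ?_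
  rw [map_smul, trace_rankOne, smul_eq_mul, div_mul_cancel₀ _ (inner_self_ne_zero.2 (hs α hα))]

theorem weightedProjSum_map (g : E ≃ₗᵢ[ℝ] E) (hg : ∀ α ∈ s, g α ∈ s)
    (hκ : ∀ α ∈ s, κ (g α) = κ α) (x : E) :
    weightedProjSum s κ (g x) = g (weightedProjSum s κ x) := by
  have hsurj : Set.SurjOn g s s :=
    Finset.surjOn_of_injOn_of_card_le _ hg g.injective.injOn le_rfl
  simp only [weightedProjSum_apply, map_sum, map_smul]
  exact (Finset.sum_nbij g hg g.injective.injOn hsurj fun α hα => by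
    rw [hκ α hα, g.inner_map_map, g.inner_map_map]).symm

end InnerProductSpace

section RootSystem

variable {N : ℕ}

local notation "E" => EuclideanSpace ℝ (Fin N)

theorem inner_sigmaRefl_self_left {α : E} (hα : α ≠ 0) (x : E) :
    ⟪α, sigmaRefl α x⟫ = -⟪α, x⟫ := by
  have hαα : ⟪α, α⟫ ≠ 0 := inner_self_ne_zero.2 hα
  rw [sigmaRefl, inner_sub_right, real_inner_smul_right]
  field_simp
  ring

theorem sigmaRefl_sigmaRefl {α : E} (hα : α ≠ 0) (x : E) : sigmaRefl α (sigmaRefl α x) = x := by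
  rw [sigmaRefl, inner_sigmaRefl_self_left hα, sigmaRefl]
  module

theorem sigmaRefl_self {α : E} (hα : α ≠ 0) : sigmaRefl α α = -α := by
  rw [sigmaRefl, mul_div_assoc, div_self (inner_self_ne_zero.2 hα)]
  module

namespace DunklRootSystem

variable (S : DunklRootSystem N) (κ : EuclideanSpace ℝ (Fin N) → ℝ)

theorem neg_mem {α : E} (hα : α ∈ S.R) : -α ∈ S.R :=
  sigmaRefl_self (S.nonzero α hα) ▸ S.invariant α hα α hα

theorem sum_R_eq_sum_pos_add_sum_pos {M : Type*} [AddCommMonoid M] (f : E → M)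
    (hf : ∀ α ∈ S.R, f (-α) = f α) :
    ∑ α ∈ S.R, f α = ∑ α ∈ S.pos, f α + ∑ α ∈ S.pos, f α := by
  rw [← Finset.sum_filter_add_sum_filter_not S.R fun α => 0 < ⟪α, S.m⟫]
  congr 1
  refine Finset.sum_nbij' (fun α => -α) (fun α => -α) ?_ ?_ (fun α _ => neg_neg α)
    (fun α _ => neg_neg α) fun α hα => (hf α (Finset.mem_filter.1 hα).1).symm
  · intro α hα
    obtain ⟨hαR, hαm⟩ := Finset.mem_filter.1 hα
    refine Finset.mem_filter.2 ⟨S.neg_mem hαR, ?_⟩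
    rw [inner_neg_left, neg_pos]
    exact lt_of_le_of_ne (not_lt.1 hαm) (S.m_transverse α hαR)
  · intro α hα
    obtain ⟨hαR, hαm⟩ := Finset.mem_filter.1 hα
    refine Finset.mem_filter.2 ⟨S.neg_mem hαR, ?_⟩
    rw [inner_neg_left, neg_pos, not_lt]
    exact hαm.le

theorem coe_inv_eq_sigmaRefl {g : E ≃ₗᵢ[ℝ] E} {α : E} (hα : α ≠ 0) (hg : ⇑g = sigmaRefl α) :
    ⇑g⁻¹ = sigmaRefl α := by
  funext x
  rw [LinearIsometryEquiv.coe_inv, g.symm_apply_eq, hg, sigmaRefl_sigmaRefl hα]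

theorem apply_mem_R_of_mem_W {g : E ≃ₗᵢ[ℝ] E} (hg : g ∈ S.W) {ξ : E} (hξ : ξ ∈ S.R) :
    g ξ ∈ S.R := by
  induction hg using Subgroup.closure_induction'' generalizing ξ with
  | mem g hg =>
    obtain ⟨α, hα, hgα⟩ := hg
    exact hgα ▸ S.invariant α hα ξ hξ
  | inv_mem g hg =>
    obtain ⟨α, hα, hgα⟩ := hg
    exact coe_inv_eq_sigmaRefl (S.nonzero α hα) hgα ▸ S.invariant α hα ξ hξ
  | one => exact hξ
  | mul g h _ _ hg hh => exact hg (hh hξ)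

theorem kappa_apply_of_mem_W (hκ : ∀ α ∈ S.R, ∀ ξ ∈ S.R, κ (sigmaRefl α ξ) = κ ξ)
    {g : E ≃ₗᵢ[ℝ] E} (hg : g ∈ S.W) {ξ : E} (hξ : ξ ∈ S.R) : κ (g ξ) = κ ξ := by
  induction hg using Subgroup.closure_induction'' generalizing ξ with
  | mem g hg =>
    obtain ⟨α, hα, hgα⟩ := hg
    exact hgα ▸ hκ α hα ξ hξ
  | inv_mem g hg =>
    obtain ⟨α, hα, hgα⟩ := hg
    exact coe_inv_eq_sigmaRefl (S.nonzero α hα) hgα ▸ hκ α hα ξ hξ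
  | one => rfl
  | mul g h _ hh' hg hh => exact (hg (S.apply_mem_R_of_mem_W hh' hξ)).trans (hh hξ)

theorem apply_mem_span_of_mem_W {g : E ≃ₗᵢ[ℝ] E} (hg : g ∈ S.W) {x : E}
    (hx : x ∈ Submodule.span ℝ (S.R : Set E)) : g x ∈ Submodule.span ℝ (S.R : Set E) :=
  have hgR : (g : E →ₗ[ℝ] E) '' S.R ⊆ S.R := by
    rintro _ ⟨ξ, hξ, rfl⟩
    exact S.apply_mem_R_of_mem_W hg hξ
  Submodule.span_mono hgR (Submodule.apply_mem_span_image_of_mem_span (g : E →ₗ[ℝ] E) hx)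

variable {S κ}

theorem weightedProjSum_R_eq_two_smul (hκ : ∀ α ∈ S.R, ∀ ξ ∈ S.R, κ (sigmaRefl α ξ) = κ ξ) :
    weightedProjSum S.R κ = (2 : ℝ) • weightedProjSum S.pos κ := by
  rw [two_smul, weightedProjSum, S.sum_R_eq_sum_pos_add_sum_pos, ← weightedProjSum]
  intro α hα
  rw [← sigmaRefl_self (S.nonzero α hα), hκ α hα α hα, sigmaRefl_self (S.nonzero α hα),
    inner_neg_neg]
  simp only [map_neg, neg_apply, neg_neg]

/-- `R₊` is not `W`-stable, but `R` is and `Σ_{R} = 2 Σ_{R₊}`, which gives the equivariance. -/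
theorem weightedProjSum_pos_map_of_mem_W (hκ : ∀ α ∈ S.R, ∀ ξ ∈ S.R, κ (sigmaRefl α ξ) = κ ξ)
    {g : E ≃ₗᵢ[ℝ] E} (hg : g ∈ S.W) (x : E) :
    weightedProjSum S.pos κ (g x) = g (weightedProjSum S.pos κ x) := by
  have h := weightedProjSum_map S.R κ g (fun ξ => S.apply_mem_R_of_mem_W hg)
    (fun ξ => S.kappa_apply_of_mem_W κ hκ hg) x
  rw [weightedProjSum_R_eq_two_smul hκ, LinearMap.smul_apply, LinearMap.smul_apply, map_smul] at h
  exact smul_right_injective E two_ne_zero h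

theorem weightedProjSum_pos_eq_smul_starProjection
    (hκ : ∀ α ∈ S.R, ∀ ξ ∈ S.R, κ (sigmaRefl α ξ) = κ ξ)
    (hirr : ∀ U : Submodule ℝ E, U ≤ Submodule.span ℝ (S.R : Set E) →
      (∀ g ∈ S.W, ∀ u ∈ U, g u ∈ U) → U = ⊥ ∨ U = Submodule.span ℝ (S.R : Set E)) :
    weightedProjSum S.pos κ = ((∑ α ∈ S.pos, κ α) /
        Module.finrank ℝ (Submodule.span ℝ (S.R : Set E))) •
      ((Submodule.span ℝ (S.R : Set E)).starProjection : E →ₗ[ℝ] E) := by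
  set V := Submodule.span ℝ (S.R : Set E)
  have hpos : Submodule.span ℝ (S.pos : Set E) ≤ V := Submodule.span_mono (Finset.filter_subset _ _)
  obtain ⟨μ, hμ⟩ := (isSymmetric_weightedProjSum S.pos κ).exists_apply_eq_smul_of_irreducible
    (fun x _ => hpos (weightedProjSum_mem_span S.pos κ x)) (S.W : Set (E ≃ₗᵢ[ℝ] E))
    (fun g hg _ => S.apply_mem_span_of_mem_W hg) (fun g hg => weightedProjSum_pos_map_of_mem_W hκ hg)
    hirr
  have hB : weightedProjSum S.pos κ = μ • (V.starProjection : E →ₗ[ℝ] E) :=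
    LinearMap.eq_smul_starProjection hμ fun x hx =>
      weightedProjSum_eq_zero_of_mem_orthogonal S.pos κ (Submodule.orthogonal_le hpos hx)
  have htrace := trace_weightedProjSum S.pos κ fun α hα => S.nonzero α (Finset.filter_subset _ _ hα)
  rw [hB, map_smul, V.trace_starProjection, smul_eq_mul] at htrace
  rw [hB, ← htrace]
  rcases eq_or_ne (Module.finrank ℝ V) 0 with hd | hd
  · have hP : (V.starProjection : E →ₗ[ℝ] E) = 0 := LinearMap.ext fun x =>
      (Submodule.mem_bot ℝ).1 (Submodule.finrank_eq_zero.1 hd ▸ V.starProjection_apply_mem x)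
    rw [hP, smul_zero, smul_zero]
  · rw [mul_div_cancel_right₀ _ (Nat.cast_ne_zero.2 hd)]

end DunklRootSystem

end RootSystem

theorem statement1_general {N : ℕ} (S : DunklRootSystem N)
    (κ : EuclideanSpace ℝ (Fin N) → ℝ)
    (hκpos : ∀ α ∈ S.R, 0 < κ α)
    (hκinv : ∀ α ∈ S.R, ∀ ξ ∈ S.R, κ (sigmaRefl α ξ) = κ ξ)
    (hirr : ∀ U : Submodule ℝ (EuclideanSpace ℝ (Fin N)),
      U ≤ Submodule.span ℝ (S.R : Set (EuclideanSpace ℝ (Fin N))) →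
      (∀ g ∈ S.W, ∀ u ∈ U, g u ∈ U) →
      U = ⊥ ∨ U = Submodule.span ℝ (S.R : Set (EuclideanSpace ℝ (Fin N))))
    (β : ℝ) (hβ : 0 < β) :
    Function.Bijective (fun x : EuclideanSpace ℝ (Fin N) =>
        x + β • ∑ α ∈ S.pos, (κ α * (⟪α, x⟫ / ⟪α, α⟫)) • α) ∧
    ∀ x : EuclideanSpace ℝ (Fin N),
      (fun x : EuclideanSpace ℝ (Fin N) =>
          x + β • ∑ α ∈ S.pos, (κ α * (⟪α, x⟫ / ⟪α, α⟫)) • α)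
        ((x - (Submodule.orthogonalProjectionOnto (Submodule.span ℝ (S.R : Set (EuclideanSpace ℝ (Fin N)))) x :
            EuclideanSpace ℝ (Fin N))) +
          (1 + β * (∑ α ∈ S.pos, κ α) /
              (Module.finrank ℝ
                (Submodule.span ℝ (S.R : Set (EuclideanSpace ℝ (Fin N)))) : ℝ))⁻¹ •
            (Submodule.orthogonalProjectionOnto (Submodule.span ℝ (S.R : Set (EuclideanSpace ℝ (Fin N)))) x :
              EuclideanSpace ℝ (Fin N))) = x := by
  set V := Submodule.span ℝ (S.R : Set (EuclideanSpace ℝ (Fin N)))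
  set γ := ∑ α ∈ S.pos, κ α
  have hγ : 0 ≤ γ := Finset.sum_nonneg fun α hα => (hκpos α (Finset.filter_subset _ _ hα)).le
  have ht : 1 + β * γ / Module.finrank ℝ V ≠ 0 := by positivity
  have hM : (fun x => x + β • ∑ α ∈ S.pos, (κ α * (⟪α, x⟫ / ⟪α, α⟫)) • α) =
      fun x => x + (β * γ / Module.finrank ℝ V) • V.starProjection x := by
    funext x
    rw [← weightedProjSum_apply,
      DunklRootSystem.weightedProjSum_pos_eq_smul_starProjection hκinv hirr,
      LinearMap.smul_apply, smul_smul, mul_div_assoc]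
    rfl
  have hinv := V.rightInverse_add_smul_starProjection ht
  rw [hM]
  exact ⟨⟨(V.leftInverse_add_smul_starProjection ht).injective, hinv.surjective⟩, hinv⟩

/-- The map `x ↦ x + β Σ_{α∈R₊} κ(α)(⟪α,x⟫/⟪α,α⟫)α` is invertible and its
inverse maps `x` to `x_⊥ + x_∥/(1 + βγ/d_R)` (the matrix `M_β` of Dunkl's intertwining operator
on linear functions). -/
theorem statement1 {N : ℕ} (hN : 1 ≤ N) (S : DunklRootSystem N)
    (κ : EuclideanSpace ℝ (Fin N) → ℝ)
    (hκpos : ∀ α ∈ S.R, 0 < κ α)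
    (hκinv : ∀ α ∈ S.R, ∀ ξ ∈ S.R, κ (sigmaRefl α ξ) = κ ξ)
    (hirr : ∀ U : Submodule ℝ (EuclideanSpace ℝ (Fin N)),
      U ≤ Submodule.span ℝ (S.R : Set (EuclideanSpace ℝ (Fin N))) →
      (∀ g ∈ S.W, ∀ u ∈ U, g u ∈ U) →
      U = ⊥ ∨ U = Submodule.span ℝ (S.R : Set (EuclideanSpace ℝ (Fin N))))
    (β : ℝ) (hβ : 0 < β) :
    Function.Bijective (fun x : EuclideanSpace ℝ (Fin N) =>
        x + β • ∑ α ∈ S.pos, (κ α * (⟪α, x⟫ / ⟪α, α⟫)) • α) ∧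
    ∀ x : EuclideanSpace ℝ (Fin N),
      (fun x : EuclideanSpace ℝ (Fin N) =>
          x + β • ∑ α ∈ S.pos, (κ α * (⟪α, x⟫ / ⟪α, α⟫)) • α)
        ((x - (Submodule.orthogonalProjectionOnto (Submodule.span ℝ (S.R : Set (EuclideanSpace ℝ (Fin N)))) x :
            EuclideanSpace ℝ (Fin N))) +
          (1 + β * (∑ α ∈ S.pos, κ α) /
              (Module.finrank ℝ
                (Submodule.span ℝ (S.R : Set (EuclideanSpace ℝ (Fin N)))) : ℝ))⁻¹ •
            (Submodule.orthogonalProjectionOnto (Submodule.span ℝ (S.R : Set (EuclideanSpace ℝ (Fin N)))) x :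
              EuclideanSpace ℝ (Fin N))) = x :=
  statement1_general S κ hκpos hκinv hirr β hβ
end
end

section
/- Let G be a finite group of orthogonal linear transformations of a finite-dimensional real inner product space V of dimension d, acting irreducibly on V (the only G-invariant subspaces are {0} and V). Then for every ξ, x ∈ V: Σ_{ρ∈G} ⟪ρξ, x⟫ ρξ = (|G|/d) ⟪ξ,ξ⟫ x. -/
open scoped RealInnerProductSpace BigOperators

noncomputable section

/-- If a finite group `G` of orthogonal transformations of a `d`-dimensional
real inner product space `V` acts irreducibly on `V`, then for all `ξ, x ∈ V`:
`Σ_{ρ∈G} ⟪ρξ, x⟫ ρξ = (|G|/d) ⟪ξ,ξ⟫ x`. -/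
theorem statement2 (V : Type*) [NormedAddCommGroup V] [InnerProductSpace ℝ V]
    [FiniteDimensional ℝ V] (hd : 1 ≤ Module.finrank ℝ V)
    (G : Subgroup (V ≃ₗᵢ[ℝ] V)) [Fintype ↥G]
    (hirr : ∀ U : Submodule ℝ V, (∀ g ∈ G, ∀ u ∈ U, g u ∈ U) → U = ⊥ ∨ U = ⊤)
    (ξ x : V) :
    ∑ ρ : ↥G, ⟪(↑ρ : V ≃ₗᵢ[ℝ] V) ξ, x⟫ • ((↑ρ : V ≃ₗᵢ[ℝ] V) ξ)
      = (((Fintype.card ↥G : ℝ) / (Module.finrank ℝ V : ℝ)) * ⟪ξ, ξ⟫) • x := by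
  have hnt : Nontrivial V := Module.finrank_pos_iff (R := ℝ) |>.mp (by omega)
  set T : V →ₗ[ℝ] V :=
    { toFun := fun y => ∑ ρ : ↥G, ⟪(↑ρ : V ≃ₗᵢ[ℝ] V) ξ, y⟫ • ((↑ρ : V ≃ₗᵢ[ℝ] V) ξ)
      map_add' := by
        intro a b
        simp [inner_add_right, add_smul, Finset.sum_add_distrib]
      map_smul' := by
        intro c a
        simp [inner_smul_right, smul_smul, Finset.smul_sum] } with hT
  have hTapp : ∀ y, T y = ∑ ρ : ↥G, ⟪(↑ρ : V ≃ₗᵢ[ℝ] V) ξ, y⟫ • ((↑ρ : V ≃ₗᵢ[ℝ] V) ξ) :=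
    fun _ => rfl
  -- T is symmetric
  have hsym : T.IsSymmetric := by
    intro a b
    simp only [hTapp, sum_inner, inner_sum, inner_smul_left, inner_smul_right,
      RCLike.conj_to_real, conj_trivial]
    refine Finset.sum_congr rfl fun ρ _ => ?_
    rw [real_inner_comm a ((↑ρ : V ≃ₗᵢ[ℝ] V) ξ)]
    ring
  -- T commutes with every g ∈ G
  have hcomm : ∀ g : ↥G, ∀ y : V, T ((↑g : V ≃ₗᵢ[ℝ] V) y) = (↑g : V ≃ₗᵢ[ℝ] V) (T y) := by
    intro g y
    rw [hTapp, hTapp, map_sum]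
    refine Fintype.sum_equiv (Equiv.mulLeft g⁻¹) _ _ fun ρ => ?_
    simp only [Equiv.coe_mulLeft]
    have hmul : ∀ (a b : ↥G) (v : V),
        (↑(a * b) : V ≃ₗᵢ[ℝ] V) v = (↑a : V ≃ₗᵢ[ℝ] V) ((↑b : V ≃ₗᵢ[ℝ] V) v) := fun _ _ _ => rfl
    have h1 : (↑g : V ≃ₗᵢ[ℝ] V) ((↑(g⁻¹ * ρ) : V ≃ₗᵢ[ℝ] V) ξ) = (↑ρ : V ≃ₗᵢ[ℝ] V) ξ := by
      rw [← hmul, mul_inv_cancel_left]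
    rw [LinearIsometryEquiv.map_smul, h1]
    congr 1
    rw [← h1, LinearIsometryEquiv.inner_map_map]
  -- eigenvalue of the symmetric operator T
  obtain ⟨μ, hμ⟩ : ∃ μ : ℝ, Module.End.HasEigenvalue T μ :=
    ⟨_, hsym.hasEigenvalue_iSup_of_finiteDimensional⟩
  set U := Module.End.eigenspace T μ with hU
  have hUinv : ∀ g ∈ G, ∀ u ∈ U, g u ∈ U := by
    intro g hg u hu
    have hu' : T u = μ • u := Module.End.mem_eigenspace_iff.mp hu
    refine Module.End.mem_eigenspace_iff.mpr ?_
    show T ((↑(⟨g, hg⟩ : ↥G) : V ≃ₗᵢ[ℝ] V) u) = μ • ((↑(⟨g, hg⟩ : ↥G) : V ≃ₗᵢ[ℝ] V) u)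
    rw [hcomm ⟨g, hg⟩ u, hu', LinearIsometryEquiv.map_smul]
  have hUtop : U = ⊤ := (hirr U hUinv).resolve_left hμ
  have hTall : ∀ y : V, T y = μ • y := by
    intro y
    have hy : y ∈ U := by rw [hUtop]; trivial
    exact Module.End.mem_eigenspace_iff.mp hy
  -- trace computation via an orthonormal basis
  set d := Module.finrank ℝ V with hdd
  set b := stdOrthonormalBasis ℝ V with hb
  have key : μ * d = (Fintype.card ↥G : ℝ) * ⟪ξ, ξ⟫ := by
    have e1 : ∀ i : Fin d, ⟪T (b i), b i⟫ = μ := by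
      intro i
      rw [hTall, real_inner_smul_left, real_inner_self_eq_norm_sq,
        b.orthonormal.1 i]
      simp
    have e2 : ∑ i : Fin d, ⟪T (b i), b i⟫ = (Fintype.card ↥G : ℝ) * ⟪ξ, ξ⟫ := by
      have : ∀ i : Fin d, ⟪T (b i), b i⟫
          = ∑ ρ : ↥G, ⟪(↑ρ : V ≃ₗᵢ[ℝ] V) ξ, b i⟫ * ⟪b i, (↑ρ : V ≃ₗᵢ[ℝ] V) ξ⟫ := by
        intro i
        rw [hTapp, sum_inner]
        refine Finset.sum_congr rfl fun ρ _ => ?_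
        rw [real_inner_smul_left, real_inner_comm (b i)]
      simp_rw [this]
      rw [Finset.sum_comm]
      have : ∀ ρ : ↥G,
          ∑ i : Fin d, ⟪(↑ρ : V ≃ₗᵢ[ℝ] V) ξ, b i⟫ * ⟪b i, (↑ρ : V ≃ₗᵢ[ℝ] V) ξ⟫ = ⟪ξ, ξ⟫ := by
        intro ρ
        rw [b.sum_inner_mul_inner, LinearIsometryEquiv.inner_map_map]
      simp_rw [this]
      simp [mul_comm]
    rw [← e2]
    simp [e1, mul_comm]
  have hd0 : (d : ℝ) ≠ 0 := by
    simp only [ne_eq, Nat.cast_eq_zero]; omega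
  have hμval : μ = (Fintype.card ↥G : ℝ) / d * ⟪ξ, ξ⟫ := by
    field_simp
    linarith [key]
  rw [← hTapp, hTall, hμval]
end
end

section
/- Let R be a reduced root system in ℝ^N with positive subsystem R₊ and W-invariant multiplicity function κ with κ(α) > 0. A polynomial function p : ℝ^N → ℝ is W-invariant if and only if for every coordinate index i and every x ∈ ℝ^N with ⟪α,x⟫ ≠ 0 for all α ∈ R₊, one has Σ_{α∈R₊} κ(α) α_i (p(x) − p(σ_α x))/⟪α,x⟫ = 0; equivalently, the Dunkl operators T_i (for any fixed β > 0) coincide with the partial derivatives ∂/∂x_i on p for all i. -/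
/-!
Write `f` for the polynomial function of `p`. If `f` is `W`-invariant then `f ∘ σ_α = f` for
every root, so all difference quotients vanish. Conversely, multiplying the `i`-th identity by
`x_i` and summing over `i` turns it into `∑_{α ∈ R₊} κ(α) (f(x) - f(σ_α x)) = 0`, first off the
root hyperplanes and then everywhere by continuity. Invariance follows by a maximum principle:
`W` acts faithfully on the finite set `R`, so it is finite and `f` attains its maximum on each
`W`-orbit; at a maximum point `y` all terms `κ(α) (f(y) - f(σ_α y))` are nonnegative with zero
sum, so they vanish. Hence the maximum points of an orbit form a set closed under every
reflection, hence under `W`, i.e. the whole orbit. The Dunkl-operator form is the same identity,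
scaled by `β / 2 ≠ 0`.
-/

open scoped RealInnerProductSpace BigOperators
open MeasureTheory

noncomputable section

variable {N : ℕ}

local notation "E" => EuclideanSpace ℝ (Fin N)

section

variable {F : Type*} [NormedAddCommGroup F] [InnerProductSpace ℝ F]

theorem dense_setOf_inner_ne_zero {α : F} (hα : α ≠ 0) : Dense {x : F | ⟪α, x⟫ ≠ 0} := by
  have hcompl : {x : F | ⟪α, x⟫ ≠ 0} = ((ℝ ∙ α)ᗮ : Set F)ᶜ := by
    ext x; simp [Submodule.mem_orthogonal_singleton_iff_inner_right]
  rw [hcompl, ← interior_eq_empty_iff_dense_compl, ← Set.not_nonempty_iff_eq_empty]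
  intro hint
  have hα' : α ∈ (ℝ ∙ α)ᗮ :=
    ((ℝ ∙ α)ᗮ.eq_top_of_nonempty_interior' hint).symm ▸ Submodule.mem_top
  exact hα (inner_self_eq_zero.mp (Submodule.mem_orthogonal_singleton_iff_inner_right.mp hα'))

theorem dense_setOf_forall_inner_ne_zero {s : Finset F} (hs : ∀ α ∈ s, α ≠ 0) :
    Dense {x : F | ∀ α ∈ s, ⟪α, x⟫ ≠ 0} := by
  have hinter := (s.finite_toSet.image fun α => {x : F | ⟪α, x⟫ ≠ 0}).dense_sInter
    (by
      rintro _ ⟨α, -, rfl⟩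
      exact isOpen_ne_fun (continuous_const.inner continuous_id) continuous_const)
    (by
      rintro _ ⟨α, hα, rfl⟩
      exact dense_setOf_inner_ne_zero (hs α hα))
  convert hinter using 1
  ext x; simp

end

theorem sigmaRefl_eq_reflection (α : E) : sigmaRefl α = ⇑(ℝ ∙ α)ᗮ.reflection := by
  funext x
  rw [Submodule.reflection_orthogonal_apply, Submodule.reflection_singleton_apply, sigmaRefl,
    real_inner_self_eq_norm_sq]
  simp only [RCLike.ofReal_real_eq_id, id_eq]
  module

theorem continuous_sigmaRefl (α : E) : Continuous (sigmaRefl α) := by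
  rw [sigmaRefl_eq_reflection]
  exact LinearIsometryEquiv.continuous _

theorem sum_coord_mul_sum_div_inner {s : Finset E} (a b : E → ℝ) {x : E}
    (hx : ∀ α ∈ s, ⟪α, x⟫ ≠ 0) :
    ∑ i, x i * ∑ α ∈ s, a α * α i * (b α / ⟪α, x⟫) = ∑ α ∈ s, a α * b α := by
  simp_rw [Finset.mul_sum, Finset.sum_comm (s := Finset.univ)]
  refine Finset.sum_congr rfl fun α hα => ?_
  have hinner : ⟪α, x⟫ = ∑ i, α i * x i := by
    simp [PiLp.inner_apply, mul_comm]
  calc ∑ i, x i * (a α * α i * (b α / ⟪α, x⟫))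
      = a α * b α / ⟪α, x⟫ * ∑ i, α i * x i := by
        rw [Finset.mul_sum]; exact Finset.sum_congr rfl fun i _ => by ring
    _ = a α * b α := by rw [← hinner, div_mul_cancel₀ _ (hx α hα)]

namespace DunklRootSystem

variable (S : DunklRootSystem N)

theorem mem_R_of_mem_pos {α : E} (h : α ∈ S.pos) : α ∈ S.R := (Finset.mem_filter.mp h).1

theorem exists_mem_pos_sigmaRefl_eq {α : E} (hα : α ∈ S.R) :
    ∃ α' ∈ S.pos, sigmaRefl α' = sigmaRefl α := by
  rcases (S.m_transverse α hα).lt_or_gt with h | h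
  · have hneg : -α ∈ S.R := by
      simpa [sigmaRefl_eq_reflection, Submodule.reflection_orthogonalComplement_singleton_eq_neg]
        using S.invariant α hα α hα
    refine ⟨-α, Finset.mem_filter.mpr ⟨hneg, by rw [inner_neg_left]; linarith⟩, ?_⟩
    funext x
    simp [sigmaRefl, neg_div, sub_eq_add_neg]
  · exact ⟨α, Finset.mem_filter.mpr ⟨hα, h⟩, rfl⟩

theorem reflection_mem_W {α : E} (hα : α ∈ S.R) : (ℝ ∙ α)ᗮ.reflection ∈ S.W :=
  Subgroup.subset_closure ⟨α, hα, (sigmaRefl_eq_reflection α).symm⟩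

variable {S} in
@[elab_as_elim]
theorem W_induction {P : (w : E ≃ₗᵢ[ℝ] E) → w ∈ S.W → Prop}
    (reflection : ∀ α (hα : α ∈ S.R), P (ℝ ∙ α)ᗮ.reflection (S.reflection_mem_W hα))
    (one : P 1 (one_mem _))
    (mul : ∀ u v hu hv, P u hu → P v hv → P (u * v) (mul_mem hu hv))
    {w : E ≃ₗᵢ[ℝ] E} (hw : w ∈ S.W) : P w hw := by
  have generator : ∀ g ∈ {g : E ≃ₗᵢ[ℝ] E | ∃ α ∈ S.R, ⇑g = sigmaRefl α},
      ∃ α ∈ S.R, g = (ℝ ∙ α)ᗮ.reflection := by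
    rintro g ⟨α, hα, hg⟩
    exact ⟨α, hα, DFunLike.coe_injective (hg.trans (sigmaRefl_eq_reflection α))⟩
  induction hw using Subgroup.closure_induction'' with
  | mem g hg =>
    obtain ⟨α, hα, rfl⟩ := generator g hg
    exact reflection α hα
  | inv_mem g hg =>
    obtain ⟨α, hα, rfl⟩ := generator g hg
    simp_rw [Submodule.reflection_inv]
    exact reflection α hα
  | one => exact one
  | mul u v hu hv ihu ihv => exact mul u v hu hv ihu ihv

theorem apply_mem_R {w : E ≃ₗᵢ[ℝ] E} (hw : w ∈ S.W) {α : E} (hα : α ∈ S.R) : w α ∈ S.R := by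
  induction hw using W_induction generalizing α with
  | reflection β hβ => rw [← sigmaRefl_eq_reflection]; exact S.invariant β hβ α hα
  | one => exact hα
  | mul u v _ _ ihu ihv => exact ihu (ihv hα)

theorem apply_eq_self_of_mem_orthogonal {w : E ≃ₗᵢ[ℝ] E} (hw : w ∈ S.W) {y : E}
    (hy : y ∈ (Submodule.span ℝ (S.R : Set E))ᗮ) : w y = y := by
  induction hw using W_induction with
  | reflection α hα =>
    refine Submodule.reflection_mem_subspace_eq_self (Submodule.orthogonal_le ?_ hy)
    exact (Submodule.span_singleton_le_iff_mem _ _).mpr (Submodule.subset_span hα)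
  | one => rfl
  | mul u v _ _ ihu ihv => simp [ihu, ihv]

theorem eq_of_eqOn_R {u v : E ≃ₗᵢ[ℝ] E} (hu : u ∈ S.W) (hv : v ∈ S.W)
    (h : Set.EqOn u v S.R) : u = v := by
  let K := Submodule.span ℝ (S.R : Set E)
  have hspan : Submodule.span ℝ ((S.R : Set E) ∪ Kᗮ) = ⊤ := by
    rw [Submodule.span_union, Submodule.span_eq]
    exact Submodule.sup_orthogonal_of_hasOrthogonalProjection
  have hlin : u.toLinearMap = v.toLinearMap := by
    refine LinearMap.ext_on hspan ?_
    rintro y (hy | hy)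
    · exact h hy
    · exact (S.apply_eq_self_of_mem_orthogonal hu hy).trans
        (S.apply_eq_self_of_mem_orthogonal hv hy).symm
  exact LinearIsometryEquiv.ext (LinearMap.congr_fun hlin)

theorem finite_W : (S.W : Set (E ≃ₗᵢ[ℝ] E)).Finite := by
  let restrict : (E ≃ₗᵢ[ℝ] E) → (S.R → E) := fun w α => w α
  refine Set.Finite.of_finite_image (f := restrict) ?_ ?_
  · refine (Set.Finite.pi fun _ => S.R.finite_toSet).subset ?_
    rintro _ ⟨w, hw, rfl⟩ α -
    exact S.apply_mem_R hw α.2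
  · intro u hu v hv huv
    exact S.eq_of_eqOn_R hu hv fun α hα => congrFun huv ⟨α, hα⟩

variable {S} {κ : EuclideanSpace ℝ (Fin N) → ℝ}

theorem apply_sigmaRefl_eq_of_le (hκpos : ∀ α ∈ S.R, 0 < κ α) {f : E → ℝ} {y : E}
    (hsum : ∑ α ∈ S.pos, κ α * (f y - f (sigmaRefl α y)) = 0)
    (hle : ∀ α ∈ S.pos, f (sigmaRefl α y) ≤ f y) {α : E} (hα : α ∈ S.R) :
    f (sigmaRefl α y) = f y := by
  obtain ⟨α', hα', hσ⟩ := S.exists_mem_pos_sigmaRefl_eq hα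
  have hnonneg : ∀ ξ ∈ S.pos, 0 ≤ κ ξ * (f y - f (sigmaRefl ξ y)) := fun ξ hξ =>
    mul_nonneg (hκpos ξ (S.mem_R_of_mem_pos hξ)).le (sub_nonneg.mpr (hle ξ hξ))
  have hterm := (Finset.sum_eq_zero_iff_of_nonneg hnonneg).mp hsum α' hα'
  rw [← hσ]
  linarith [(mul_eq_zero.mp hterm).resolve_left (hκpos α' (S.mem_R_of_mem_pos hα')).ne']

theorem apply_eq_of_sum_sub_eq_zero (hκpos : ∀ α ∈ S.R, 0 < κ α) {f : E → ℝ}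
    (hf : ∀ x, ∑ α ∈ S.pos, κ α * (f x - f (sigmaRefl α x)) = 0)
    {w : E ≃ₗᵢ[ℝ] E} (hw : w ∈ S.W) (x : E) : f (w x) = f x := by
  set O : Set E := (fun g : E ≃ₗᵢ[ℝ] E => g x) '' S.W
  have hO : ∀ g ∈ S.W, ∀ z ∈ O, g z ∈ O := by
    rintro g hg _ ⟨u, hu, rfl⟩
    exact ⟨g * u, mul_mem hg hu, rfl⟩
  obtain ⟨y, ⟨w₀, hw₀, rfl⟩, hmax⟩ :=
    Set.exists_max_image O f (S.finite_W.image _) ⟨x, 1, one_mem _, rfl⟩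
  set M : Set E := {z | z ∈ O ∧ f z = f (w₀ x)}
  have hM : ∀ g ∈ S.W, ∀ z ∈ M, g z ∈ M := by
    intro g hg
    induction hg using W_induction with
    | reflection α hα =>
      rintro z ⟨hzO, hz⟩
      have hσO : ∀ β ∈ S.R, sigmaRefl β z ∈ O := fun β hβ => by
        rw [sigmaRefl_eq_reflection]; exact hO _ (S.reflection_mem_W hβ) z hzO
      rw [← sigmaRefl_eq_reflection]
      refine ⟨hσO α hα, ?_⟩
      rw [← hz]
      refine apply_sigmaRefl_eq_of_le hκpos (hf z) (fun β hβ => ?_) hα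
      exact hz ▸ hmax _ (hσO β (S.mem_R_of_mem_pos hβ))
    | one => exact fun z hz => hz
    | mul u v _ _ ihu ihv => exact fun z hz => ihu _ (ihv z hz)
  have hx : x ∈ M := by
    simpa using hM w₀⁻¹ (inv_mem hw₀) (w₀ x) ⟨⟨w₀, hw₀, rfl⟩, rfl⟩
  exact (hM w hw x hx).2.trans hx.2.symm

theorem invariant_iff_forall_sum_eq_zero (hκpos : ∀ α ∈ S.R, 0 < κ α) {f : E → ℝ}
    (hf : Continuous f) :
    (∀ ρ ∈ S.W, ∀ x, f (ρ x) = f x) ↔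
      ∀ i : Fin N, ∀ x : E, (∀ α ∈ S.pos, ⟪α, x⟫ ≠ 0) →
        ∑ α ∈ S.pos, κ α * α i * ((f x - f (sigmaRefl α x)) / ⟪α, x⟫) = 0 := by
  constructor
  · intro hinv i x _
    refine Finset.sum_eq_zero fun α hα => ?_
    have hσ := hinv _ (S.reflection_mem_W (S.mem_R_of_mem_pos hα)) x
    rw [← sigmaRefl_eq_reflection] at hσ
    rw [hσ, sub_self, zero_div, mul_zero]
  · intro H
    have hreg : ∀ x ∈ {x : E | ∀ α ∈ S.pos, ⟪α, x⟫ ≠ 0},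
        ∑ α ∈ S.pos, κ α * (f x - f (sigmaRefl α x)) = 0 := by
      intro x hx
      rw [← sum_coord_mul_sum_div_inner _ _ hx]
      simp [H _ x hx]
    have hcont : Continuous fun x => ∑ α ∈ S.pos, κ α * (f x - f (sigmaRefl α x)) :=
      continuous_finsetSum _ fun α _ =>
        continuous_const.mul (hf.sub (hf.comp (continuous_sigmaRefl α)))
    have hdense := dense_setOf_forall_inner_ne_zero fun α hα =>
      S.nonzero α (S.mem_R_of_mem_pos hα)
    exact fun ρ hρ => apply_eq_of_sum_sub_eq_zero hκpos
      (congrFun (Continuous.ext_on hdense hcont continuous_const hreg)) hρ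

end DunklRootSystem

theorem dunklT_eq_fderiv_iff (S : DunklRootSystem N) (κ : E → ℝ) {β : ℝ} (hβ : β ≠ 0) (i : Fin N)
    (f : E → ℝ) (x : E) :
    dunklT S κ β i f x = fderiv ℝ f x (EuclideanSpace.single i 1) ↔
      ∑ α ∈ S.pos, κ α * α i * ((f x - f (sigmaRefl α x)) / ⟪α, x⟫) = 0 := by
  simp only [dunklT, add_eq_left, mul_eq_zero, div_eq_zero_iff, hβ, two_ne_zero, or_self,
    false_or, mul_comm (κ _)]

theorem statement5_general {N : ℕ} (S : DunklRootSystem N)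
    (κ : EuclideanSpace ℝ (Fin N) → ℝ)
    (hκpos : ∀ α ∈ S.R, 0 < κ α)
    (p : MvPolynomial (Fin N) ℝ) :
    ((∀ ρ ∈ S.W, ∀ x : EuclideanSpace ℝ (Fin N),
        MvPolynomial.eval (fun i => ρ x i) p = MvPolynomial.eval (fun i => x i) p) ↔
      (∀ i : Fin N, ∀ x : EuclideanSpace ℝ (Fin N), (∀ α ∈ S.pos, ⟪α, x⟫ ≠ 0) →
        ∑ α ∈ S.pos, κ α * α i *
            ((MvPolynomial.eval (fun j => x j) p -
              MvPolynomial.eval (fun j => sigmaRefl α x j) p) / ⟪α, x⟫) = 0)) ∧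
    (∀ β : ℝ, 0 < β →
      ((∀ ρ ∈ S.W, ∀ x : EuclideanSpace ℝ (Fin N),
          MvPolynomial.eval (fun i => ρ x i) p = MvPolynomial.eval (fun i => x i) p) ↔
        (∀ i : Fin N, ∀ x : EuclideanSpace ℝ (Fin N), (∀ α ∈ S.pos, ⟪α, x⟫ ≠ 0) →
          dunklT S κ β i (fun z => MvPolynomial.eval (fun j => z j) p) x
            = fderiv ℝ (fun z : EuclideanSpace ℝ (Fin N) =>
                MvPolynomial.eval (fun j => z j) p) x (EuclideanSpace.single i 1)))) := by
  set P : EuclideanSpace ℝ (Fin N) → ℝ := fun z => MvPolynomial.eval (fun j => z j) p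
  have hinv := S.invariant_iff_forall_sum_eq_zero hκpos (f := P)
    ((MvPolynomial.continuous_eval p).comp (PiLp.continuous_ofLp 2 _))
  refine ⟨hinv, fun β hβ => hinv.trans ?_⟩
  exact forall_congr' fun i => forall_congr' fun x => forall_congr' fun _ =>
    (dunklT_eq_fderiv_iff S κ hβ.ne' i P x).symm

/-- A polynomial function `p` is `W`-invariant iff the difference part of every
Dunkl operator annihilates it; equivalently (for any `β > 0`) the Dunkl operators `T_i` coincide
with the partial derivatives `∂/∂x_i` on `p`. -/
theorem statement5 {N : ℕ} (hN : 1 ≤ N) (S : DunklRootSystem N)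
    (κ : EuclideanSpace ℝ (Fin N) → ℝ)
    (hκpos : ∀ α ∈ S.R, 0 < κ α)
    (hκinv : ∀ α ∈ S.R, ∀ ξ ∈ S.R, κ (sigmaRefl α ξ) = κ ξ)
    (p : MvPolynomial (Fin N) ℝ) :
    ((∀ ρ ∈ S.W, ∀ x : EuclideanSpace ℝ (Fin N),
        MvPolynomial.eval (fun i => ρ x i) p = MvPolynomial.eval (fun i => x i) p) ↔
      (∀ i : Fin N, ∀ x : EuclideanSpace ℝ (Fin N), (∀ α ∈ S.pos, ⟪α, x⟫ ≠ 0) →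
        ∑ α ∈ S.pos, κ α * α i *
            ((MvPolynomial.eval (fun j => x j) p -
              MvPolynomial.eval (fun j => sigmaRefl α x j) p) / ⟪α, x⟫) = 0)) ∧
    (∀ β : ℝ, 0 < β →
      ((∀ ρ ∈ S.W, ∀ x : EuclideanSpace ℝ (Fin N),
          MvPolynomial.eval (fun i => ρ x i) p = MvPolynomial.eval (fun i => x i) p) ↔
        (∀ i : Fin N, ∀ x : EuclideanSpace ℝ (Fin N), (∀ α ∈ S.pos, ⟪α, x⟫ ≠ 0) →
          dunklT S κ β i (fun z => MvPolynomial.eval (fun j => z j) p) x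
            = fderiv ℝ (fun z : EuclideanSpace ℝ (Fin N) =>
                MvPolynomial.eval (fun j => z j) p) x (EuclideanSpace.single i 1)))) :=
  statement5_general S κ hκpos p
end
end

section
/- Let R be a reduced root system in ℝ^N with positive subsystem R₊, W-invariant multiplicity function κ with κ(α) > 0, and γ = Σ_{α∈R₊} κ(α). If p : ℝ^N → ℝ is a nonzero polynomial function and λ is a real number such that (1/γ) Σ_{α∈R₊} κ(α) p(σ_α x) = λ p(x) for all x ∈ ℝ^N, then |λ| ≤ 1. -/
open scoped RealInnerProductSpace BigOperators
open MeasureTheory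

noncomputable section

lemma norm_sigmaRefl {N : ℕ} (α x : EuclideanSpace ℝ (Fin N)) (hα : α ≠ 0) :
    ‖sigmaRefl α x‖ = ‖x‖ := by
  have h : ⟪α, α⟫ ≠ 0 := inner_self_ne_zero.mpr hα
  have key : ⟪sigmaRefl α x, sigmaRefl α x⟫ = ⟪x, x⟫ := by
    simp only [sigmaRefl, inner_sub_left, inner_sub_right, real_inner_smul_left,
      real_inner_smul_right, real_inner_comm x α]
    generalize hb : (⟪α, α⟫ : ℝ) = b at h ⊢
    generalize (⟪α, x⟫ : ℝ) = a
    field_simp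
    ring
  have h1 : ‖sigmaRefl α x‖ ^ 2 = ‖x‖ ^ 2 := by
    rw [← real_inner_self_eq_norm_sq, ← real_inner_self_eq_norm_sq, key]
  have := congrArg Real.sqrt h1
  rwa [Real.sqrt_sq (norm_nonneg _), Real.sqrt_sq (norm_nonneg _)] at this

lemma continuous_evalP {N : ℕ} (p : MvPolynomial (Fin N) ℝ) :
    Continuous fun x : EuclideanSpace ℝ (Fin N) => MvPolynomial.eval (fun i => x i) p := by
  apply p.continuous_eval.comp
  exact continuous_pi fun i => (continuous_apply i).comp (PiLp.continuous_ofLp 2 _)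

/-- If a nonzero polynomial function `p` satisfies
`(1/γ) Σ_{α∈R₊} κ(α) p(σ_α x) = λ p(x)` for all `x`, then `|λ| ≤ 1`. -/
theorem statement6 {N : ℕ} (hN : 1 ≤ N) (S : DunklRootSystem N)
    (κ : EuclideanSpace ℝ (Fin N) → ℝ)
    (hκpos : ∀ α ∈ S.R, 0 < κ α)
    (hκinv : ∀ α ∈ S.R, ∀ ξ ∈ S.R, κ (sigmaRefl α ξ) = κ ξ)
    (p : MvPolynomial (Fin N) ℝ)
    (hp : ∃ x : EuclideanSpace ℝ (Fin N), MvPolynomial.eval (fun i => x i) p ≠ 0)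
    (lam : ℝ)
    (heig : ∀ x : EuclideanSpace ℝ (Fin N),
      (1 / ∑ α ∈ S.pos, κ α) *
          ∑ α ∈ S.pos, κ α * MvPolynomial.eval (fun i => sigmaRefl α x i) p
        = lam * MvPolynomial.eval (fun i => x i) p) :
    |lam| ≤ 1 := by
  set P : EuclideanSpace ℝ (Fin N) → ℝ :=
    fun x => MvPolynomial.eval (fun i => x i) p with hP
  obtain ⟨x₁, hx₁⟩ := hp
  by_cases hpos : S.pos.Nonempty
  · -- γ > 0
    have hγ : 0 < ∑ α ∈ S.pos, κ α :=
      Finset.sum_pos (fun α hα => hκpos α ((Finset.filter_subset _ S.R) hα)) hpos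
    set γ := ∑ α ∈ S.pos, κ α with hγdef
    -- maximize |P| on closed ball of radius ‖x₁‖
    have hK : IsCompact (Metric.closedBall (0 : EuclideanSpace ℝ (Fin N)) ‖x₁‖) :=
      isCompact_closedBall 0 _
    have hx₁K : x₁ ∈ Metric.closedBall (0 : EuclideanSpace ℝ (Fin N)) ‖x₁‖ := by
      simp [Metric.mem_closedBall]
    have hcont : Continuous fun x => |P x| := (continuous_evalP p).abs
    obtain ⟨x₀, hx₀K, hmax'⟩ := hK.exists_isMaxOn ⟨x₁, hx₁K⟩ hcont.continuousOn
    have hmax : ∀ y ∈ Metric.closedBall (0 : EuclideanSpace ℝ (Fin N)) ‖x₁‖,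
        |P y| ≤ |P x₀| := fun y hy => hmax' hy
    have hM : 0 < |P x₀| := lt_of_lt_of_le (abs_pos.mpr hx₁) (hmax x₁ hx₁K)
    have hrefl : ∀ α ∈ S.pos, |P (sigmaRefl α x₀)| ≤ |P x₀| := by
      intro α hα
      apply hmax
      simp only [Metric.mem_closedBall, dist_zero_right]
      rw [norm_sigmaRefl α x₀ (S.nonzero α ((Finset.filter_subset _ S.R) hα))]
      simpa [Metric.mem_closedBall, dist_zero_right] using hx₀K
    have key : |lam| * |P x₀| ≤ |P x₀| := by
      have h1 : |lam * P x₀| ≤ (1 / γ) * ∑ α ∈ S.pos, κ α * |P x₀| := by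
        rw [← heig x₀]
        rw [abs_mul, abs_of_pos (by positivity : (0:ℝ) < 1 / γ)]
        apply mul_le_mul_of_nonneg_left _ (by positivity)
        calc |∑ α ∈ S.pos, κ α * P (sigmaRefl α x₀)|
            ≤ ∑ α ∈ S.pos, |κ α * P (sigmaRefl α x₀)| := Finset.abs_sum_le_sum_abs _ _
          _ ≤ ∑ α ∈ S.pos, κ α * |P x₀| := by
              apply Finset.sum_le_sum
              intro α hα
              rw [abs_mul, abs_of_pos (hκpos α ((Finset.filter_subset _ S.R) hα))]
              exact mul_le_mul_of_nonneg_left (hrefl α hα) (le_of_lt (hκpos α ((Finset.filter_subset _ S.R) hα)))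
      have h2 : (1 / γ) * ∑ α ∈ S.pos, κ α * |P x₀| = |P x₀| := by
        rw [← Finset.sum_mul, ← hγdef]
        field_simp
      rw [← abs_mul]
      rw [h2] at h1
      exact h1
    exact le_of_mul_le_mul_right (by simpa [one_mul] using key) hM
  · -- S.pos empty: sums are zero, lam = 0
    rw [Finset.not_nonempty_iff_eq_empty] at hpos
    have := heig x₁
    rw [hpos] at this
    simp at this
    rcases this with h | h
    · rw [h]; simp
    · exact absurd h hx₁
end
end
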